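/- arXiv:2409.17651 — 6 statements merged into one kernel-verified Lean document; each statement's English description precedes it below -/
import Mathlib

section
/- Every finite simple graph G with n vertices admits a faithful and linearly independent orthogonal co-representation in ℝⁿ; that is, there exists an injective map v : V(G) → ℝⁿ such that ‖v_i‖ = 1 for every vertex i, the family (v_i)_{i ∈ V(G)} is linearly independent, and for all distinct vertices i, j: i and j are adjacent in G if and only if ⟨v_i, v_j⟩ = 0. -/
/-! Perturb the identity by a small multiple `c` of the adjacency matrix of the complement
`Gᶜ`. For `0 < c < 1 / n` the matrix `1 + c • Gᶜ.adjMatrix` is strictly diagonally dominant,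
hence positive definite by Gershgorin, so it is the Gram matrix of a linearly independent family
of vectors in `ℝⁿ`. Its diagonal entries are `1` and its off-diagonal entry at `(i, j)` vanishes
exactly when `i` and `j` are adjacent in `G`. -/

open Finset Matrix RealInnerProductSpace
open scoped ComplexOrder

theorem Matrix.IsHermitian.posDef_of_sum_row_lt_diag {𝕜 n : Type*} [RCLike 𝕜] [Fintype n]
    [DecidableEq n] {A : Matrix n n 𝕜} (hA : A.IsHermitian)
    (h : ∀ k, ∑ j ∈ univ.erase k, ‖A k j‖ < RCLike.re (A k k)) : A.PosDef := by
  rw [hA.posDef_iff_eigenvalues_pos]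
  intro i
  set μ := hA.eigenvalues i
  have hμ : Module.End.HasEigenvalue (toLin' A) (algebraMap ℝ 𝕜 μ) := by
    rw [Module.End.hasEigenvalue_iff_mem_spectrum, spectrum_toLin']
    exact spectrum.algebraMap_mem 𝕜 (hA.eigenvalues_mem_spectrum_real i)
  obtain ⟨k, hk⟩ := eigenvalue_mem_ball hμ
  rw [Metric.mem_closedBall, dist_eq_norm] at hk
  have hre : RCLike.re (A k k) - μ ≤ ‖algebraMap ℝ 𝕜 μ - A k k‖ := by
    refine le_trans ?_ (RCLike.abs_re_le_norm _)
    rw [map_sub, RCLike.algebraMap_eq_ofReal, RCLike.ofReal_re, abs_sub_comm]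
    exact le_abs_self _
  linarith [h k]

open scoped MatrixOrder in
theorem Matrix.PosSemidef.exists_gram_eq {𝕜 n E : Type*} [RCLike 𝕜] [Fintype n]
    [NormedAddCommGroup E] [InnerProductSpace 𝕜 E] (b : OrthonormalBasis n 𝕜 E)
    {M : Matrix n n 𝕜} (hM : M.PosSemidef) : ∃ v : n → E, gram 𝕜 v = M := by
  classical
  obtain ⟨B, rfl⟩ := CStarAlgebra.nonneg_iff_eq_star_mul_self.mp hM.nonneg
  refine ⟨fun j ↦ b.repr.symm (WithLp.toLp 2 fun i ↦ B i j), ?_⟩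
  rw [gram_eq_conjTranspose_mul b]
  simp only [LinearIsometryEquiv.apply_symm_apply]
  rfl

theorem SimpleGraph.posDef_one_add_smul_adjMatrix {V : Type*} [Fintype V] [DecidableEq V]
    (H : SimpleGraph V) [DecidableRel H.Adj] {c : ℝ} (hc : |c| * Fintype.card V < 1) :
    (1 + c • H.adjMatrix ℝ).PosDef := by
  have hsymm : (1 + c • H.adjMatrix ℝ).IsHermitian :=
    isHermitian_one.add ((H.isHermitian_adjMatrix ℝ).smul (IsSelfAdjoint.all c))
  refine hsymm.posDef_of_sum_row_lt_diag fun k ↦ ?_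
  have hoff : ∀ j ∈ univ.erase k, ‖(1 + c • H.adjMatrix ℝ) k j‖ ≤ |c| := fun j hj ↦ by
    rw [Matrix.add_apply, one_apply_ne (ne_of_mem_erase hj).symm, zero_add, Matrix.smul_apply,
      smul_eq_mul, Real.norm_eq_abs, abs_mul]
    by_cases hadj : H.Adj k j <;> simp [hadj]
  calc ∑ j ∈ univ.erase k, ‖(1 + c • H.adjMatrix ℝ) k j‖
      ≤ ∑ _j ∈ univ.erase k, |c| := sum_le_sum hoff
    _ ≤ |c| * Fintype.card V := by
      rw [sum_const, nsmul_eq_mul, mul_comm]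
      gcongr
      exact_mod_cast card_le_univ _
    _ < RCLike.re ((1 + c • H.adjMatrix ℝ) k k) := by simpa using hc

/-- **Every finite simple graph `G` with `n` vertices admits a faithful and linearly
independent orthogonal co-representation in `ℝⁿ`**: there is an injective assignment of
unit vectors to the vertices, forming a linearly independent family, such that two
distinct vertices are adjacent iff the corresponding vectors are orthogonal. -/
theorem faithful_linearIndependent_orthogonal_corepresentation
    (V : Type*) [Fintype V] (G : SimpleGraph V) :
    ∃ v : V → EuclideanSpace ℝ (Fin (Fintype.card V)),
      Function.Injective v ∧
      (∀ i, ‖v i‖ = 1) ∧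
      LinearIndependent ℝ v ∧
      ∀ i j : V, i ≠ j → (G.Adj i j ↔ ⟪v i, v j⟫ = 0) := by
  classical
  set c : ℝ := 1 / (Fintype.card V + 1)
  have hc : 0 < c := by positivity
  have hM := Gᶜ.posDef_one_add_smul_adjMatrix (c := c) <| by
    rw [abs_of_pos hc, div_mul_eq_mul_div, one_mul, div_lt_one (by positivity)]
    linarith
  obtain ⟨v, hv⟩ := hM.posSemidef.exists_gram_eq
    ((EuclideanSpace.basisFun (Fin (Fintype.card V)) ℝ).reindex (Fintype.equivFin V).symm)
  have hinner (i j : V) : ⟪v i, v j⟫ = (1 + c • Gᶜ.adjMatrix ℝ) i j := by rw [← hv]; rfl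
  have hli : LinearIndependent ℝ v := linearIndependent_of_posDef_gram (hv ▸ hM)
  refine ⟨v, hli.injective, fun i ↦ ?_, hli, fun i j hij ↦ ?_⟩
  · rw [← pow_eq_one_iff_of_nonneg (norm_nonneg _) two_ne_zero, ← real_inner_self_eq_norm_sq,
      hinner]
    simp
  · simp [hinner, one_apply_ne hij, hij, hc.ne']
end

section
/- Let v₁, …, v_{n−1} be linearly independent unit vectors in ℝⁿ and let T ⊆ {1, …, n−1} be any subset of indices. Then there exists a unit vector v_n ∈ ℝⁿ such that the family v₁, …, v_{n−1}, v_n is linearly independent and, for each i ∈ {1, …, n−1}, ⟨v_n, v_i⟩ = 0 if and only if i ∈ T. -/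
/-!
By Riesz representation on the span `S` of the `vᵢ`, some `z ∈ S` has `⟪z, vᵢ⟫ = 0` for `i ∈ T`
and `= 1` otherwise. Since `dim S = n < n + 1`, there is a nonzero `u ⊥ S`; then `z + u` has the
same inner products with the `vᵢ` but lies outside `S`, and normalizing it gives `w`.
-/

open RealInnerProductSpace Module Set Submodule

section

variable {E : Type*} [NormedAddCommGroup E] [InnerProductSpace ℝ E]
  {ι : Type*} [Finite ι] {v : ι → E}

theorem LinearIndependent.exists_mem_span_inner_eq (hv : LinearIndependent ℝ v) (c : ι → ℝ) :
    ∃ z ∈ span ℝ (range v), ∀ i, ⟪z, v i⟫ = c i := by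
  have : FiniteDimensional ℝ (span ℝ (range v)) := .span_of_finite ℝ (finite_range v)
  let φ : StrongDual ℝ (span ℝ (range v)) :=
    LinearMap.toContinuousLinearMap ((Basis.span hv).constr ℝ c)
  refine ⟨(InnerProductSpace.toDual ℝ (span ℝ (range v))).symm φ, coe_mem _, fun i => ?_⟩
  have h := InnerProductSpace.toDual_symm_apply (x := Basis.span hv i) (y := φ)
  rwa [Submodule.coe_inner, LinearMap.coe_toContinuousLinearMap', Basis.constr_basis,
    Basis.span_apply] at h

theorem LinearIndependent.exists_inner_eq_notMem_span (hv : LinearIndependent ℝ v)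
    (hspan : span ℝ (range v) ≠ ⊤) (c : ι → ℝ) :
    ∃ w ∉ span ℝ (range v), ∀ i, ⟪w, v i⟫ = c i := by
  set S := span ℝ (range v)
  have : FiniteDimensional ℝ S := .span_of_finite ℝ (finite_range v)
  obtain ⟨z, hzS, hz⟩ := hv.exists_mem_span_inner_eq c
  obtain ⟨u, huS, hu⟩ := Submodule.exists_mem_ne_zero_of_ne_bot
    (mt Submodule.orthogonal_eq_bot_iff.mp hspan)
  refine ⟨z + u, fun hmem => hu ?_, fun i => ?_⟩
  · have : u ∈ S := by simpa using S.sub_mem hmem hzS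
    exact disjoint_def.mp S.orthogonal_disjoint u this huS
  · rw [inner_add_left, hz,
      Submodule.inner_left_of_mem_orthogonal (subset_span (mem_range_self i)) huS, add_zero]

theorem LinearIndependent.exists_norm_eq_one_notMem_span_inner_eq_zero_iff
    (hv : LinearIndependent ℝ v) (hspan : span ℝ (range v) ≠ ⊤) (p : ι → Prop) :
    ∃ w, ‖w‖ = 1 ∧ w ∉ span ℝ (range v) ∧ ∀ i, (⟪w, v i⟫ = 0 ↔ p i) := by
  classical
  obtain ⟨w, hwS, hw⟩ := hv.exists_inner_eq_notMem_span hspan fun i => if p i then 0 else 1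
  have hw0 : w ≠ 0 := by rintro rfl; exact hwS (zero_mem _)
  refine ⟨‖w‖⁻¹ • w, norm_smul_inv_norm hw0, ?_, fun i => ?_⟩
  · rwa [smul_mem_iff _ (inv_ne_zero (norm_ne_zero_iff.mpr hw0))]
  · rw [inner_smul_left, hw]
    by_cases hi : p i <;> simp [hi, hw0]

end

theorem exists_unit_vector_orthogonal_iff_mem_general
    (n : ℕ) (v : Fin n → EuclideanSpace ℝ (Fin (n + 1)))
    (hli : LinearIndependent ℝ v)
    (T : Set (Fin n)) :
    ∃ w : EuclideanSpace ℝ (Fin (n + 1)), ‖w‖ = 1 ∧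
      LinearIndependent ℝ (Fin.snoc v w : Fin (n + 1) → EuclideanSpace ℝ (Fin (n + 1))) ∧
      ∀ i : Fin n, (⟪w, v i⟫ = 0 ↔ i ∈ T) := by
  have hspan : span ℝ (range v) ≠ ⊤ := by
    intro htop
    have := finrank_span_eq_card hli
    rw [htop, finrank_top, finrank_euclideanSpace_fin, Fintype.card_fin] at this
    omega
  obtain ⟨w, hw1, hwS, hw⟩ := hli.exists_norm_eq_one_notMem_span_inner_eq_zero_iff hspan (· ∈ T)
  exact ⟨w, hw1, linearIndependent_finSnoc.mpr ⟨hli, hwS⟩, hw⟩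

/-- **Induction step for orthogonal co-representations.** Given `n` linearly independent
unit vectors `v 0, …, v (n-1)` in `ℝ^(n+1)` and any set `T` of indices, there is a unit
vector `w ∈ ℝ^(n+1)` such that the extended family `v 0, …, v (n-1), w` is linearly
independent and, for each index `i`, `⟪w, v i⟫ = 0` iff `i ∈ T`.

(This is the statement "given `n-1` linearly independent unit vectors in `ℝⁿ` …", with the
ambient dimension written as `n + 1` so that there are `n` given vectors.) -/
theorem exists_unit_vector_orthogonal_iff_mem
    (n : ℕ) (v : Fin n → EuclideanSpace ℝ (Fin (n + 1)))
    (hunit : ∀ i, ‖v i‖ = 1) (hli : LinearIndependent ℝ v)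
    (T : Set (Fin n)) :
    ∃ w : EuclideanSpace ℝ (Fin (n + 1)), ‖w‖ = 1 ∧
      LinearIndependent ℝ (Fin.snoc v w : Fin (n + 1) → EuclideanSpace ℝ (Fin (n + 1))) ∧
      ∀ i : Fin n, (⟪w, v i⟫ = 0 ↔ i ∈ T) :=
  exists_unit_vector_orthogonal_iff_mem_general n v hli T
end

section
/- Let G be a finite simple graph with at least one vertex, with maximal cliques C₁, …, C_N, and let Gᵉ be its higher-dimensional context extension. Then the maximal cliques of Gᵉ are exactly the sets C_k ∪ {x_k} for k = 1, …, N. -/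
open Finset

/-- A maximal clique of a simple graph, as a finite set of vertices. -/
def IsMaxClique {V : Type*} (G : SimpleGraph V) (C : Finset V) : Prop :=
  G.IsClique (C : Set V) ∧ ∀ D : Finset V, G.IsClique (D : Set V) → C ⊆ D → D = C

/-- The finite set of all maximal cliques of a finite simple graph. -/
noncomputable def maxCliques {V : Type*} [Fintype V] (G : SimpleGraph V) :
    Finset (Finset V) := by
  classical exact Finset.univ.filter (fun C => IsMaxClique G C)

/-- `c(G)`: the total number of maximal cliques of `G`. -/
noncomputable def numMaxCliques {V : Type*} [Fintype V] (G : SimpleGraph V) : ℕ :=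
  (maxCliques G).card

/-- `c_G(i)`: the number of maximal cliques of `G` containing the vertex `i`. -/
noncomputable def cG {V : Type*} [Fintype V] (G : SimpleGraph V) (i : V) : ℕ := by
  classical exact ((maxCliques G).filter (fun C => i ∈ C)).card

/-- A state on a finite simple graph: values in `[0,1]` summing to `1` on each
maximal clique. -/
def IsGraphState {V : Type*} [Fintype V] (G : SimpleGraph V) (p : V → ℝ) : Prop :=
  (∀ i, 0 ≤ p i ∧ p i ≤ 1) ∧ ∀ C ∈ maxCliques G, ∑ i ∈ C, p i = 1

/-- An independent set of a simple graph: pairwise non-adjacent vertices. -/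
def IsIndep {V : Type*} (G : SimpleGraph V) (I : Finset V) : Prop :=
  ∀ i ∈ I, ∀ j ∈ I, i ≠ j → ¬ G.Adj i j

/-- `α(G; w)`: the maximum weight of an independent set of `G` for the weight `w`. -/
noncomputable def alphaW {V : Type*} [Fintype V] (G : SimpleGraph V) (w : V → ℝ) : ℝ :=
  sSup { x : ℝ | ∃ I : Finset V, IsIndep G I ∧ x = ∑ i ∈ I, w i }

/-- The higher-dimensional context extension `Gᵉ` of `G`: one new vertex is added for
each maximal clique of `G`, adjacent exactly to the vertices of that clique; the new
vertices are pairwise non-adjacent and the old adjacency is kept. -/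
noncomputable def contextExtension {V : Type*} [Fintype V] (G : SimpleGraph V) :
    SimpleGraph (V ⊕ {C : Finset V // C ∈ maxCliques G}) where
  Adj x y :=
    match x, y with
    | Sum.inl a, Sum.inl b => G.Adj a b
    | Sum.inl a, Sum.inr C => a ∈ (C : Finset V)
    | Sum.inr C, Sum.inl a => a ∈ (C : Finset V)
    | Sum.inr _, Sum.inr _ => False
  symm := by
    refine ⟨?_⟩
    rintro (a | C) (b | D) h
    · exact G.adj_symm h
    · exact h
    · exact h
    · exact h
  loopless := by
    refine ⟨?_⟩
    rintro (a | C) h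
    · exact G.irrefl h
    · exact h

/-! The new vertices are pairwise non-adjacent, so a clique of `Gᵉ` contains at most one of
them; if it contains `x_C`, all its other vertices are neighbours of `x_C`, i.e. lie in `C`.
A clique without new vertices is a clique of `G`, hence lies in some maximal clique `C`.
Either way every clique of `Gᵉ` lies in one of the cliques `C ∪ {x_C}`, and as `x_C`
determines `C`, none of these lies in another. -/

section ContextExtension

variable {V : Type*} [Fintype V] (G : SimpleGraph V)

lemma mem_maxCliques_iff {C : Finset V} : C ∈ maxCliques G ↔ IsMaxClique G C := by
  classical
  simp [maxCliques]

lemma exists_mem_maxCliques_superset {A : Finset V} (hA : G.IsClique (A : Set V)) :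
    ∃ C ∈ maxCliques G, A ⊆ C := by
  obtain ⟨C, hAC, hC, hCmax⟩ :=
    Finite.exists_le_maximal (p := fun C : Finset V => G.IsClique (C : Set V)) hA
  exact ⟨C, (mem_maxCliques_iff G).2
    ⟨hC, fun D hD hCD => le_antisymm (hCmax hD hCD) hCD⟩, hAC⟩

variable {G}

lemma not_contextExtension_adj_inr_inr {C C' : {C : Finset V // C ∈ maxCliques G}} :
    ¬ (contextExtension G).Adj (Sum.inr C) (Sum.inr C') :=
  id

variable [DecidableEq V]

/-- The clique `C ∪ {x_C}` of `Gᵉ`. -/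
def contextClique (C : {C : Finset V // C ∈ maxCliques G}) :
    Finset (V ⊕ {C : Finset V // C ∈ maxCliques G}) :=
  insert (Sum.inr C) (C.1.image Sum.inl)

lemma isClique_contextClique (C : {C : Finset V // C ∈ maxCliques G}) :
    (contextExtension G).IsClique (contextClique C : Set _) := by
  have hC : G.IsClique (C.1 : Set V) := ((mem_maxCliques_iff G).1 C.2).1
  intro x hx y hy hxy
  simp only [contextClique, coe_insert, coe_image, Set.mem_insert_iff, Set.mem_image,
    mem_coe] at hx hy
  rcases hx with rfl | ⟨a, ha, rfl⟩ <;> rcases hy with rfl | ⟨b, hb, rfl⟩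
  · exact absurd rfl hxy
  · exact (contextExtension G).adj_symm hb
  · exact ha
  · exact hC ha hb (by simpa using hxy)

lemma subset_contextClique_of_inr_mem {D : Finset (V ⊕ {C : Finset V // C ∈ maxCliques G})}
    (hD : (contextExtension G).IsClique (D : Set _)) {C : {C : Finset V // C ∈ maxCliques G}}
    (hC : Sum.inr C ∈ D) : D ⊆ contextClique C := by
  rintro (a | C') hx
  · have : a ∈ C.1 := hD hx hC (by simp)
    exact mem_insert_of_mem (mem_image_of_mem _ this)
  · obtain rfl : C' = C := by
      by_contra hne
      exact not_contextExtension_adj_inr_inr (hD hx hC (by simpa using hne))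
    exact mem_insert_self _ _

lemma exists_subset_contextClique {D : Finset (V ⊕ {C : Finset V // C ∈ maxCliques G})}
    (hD : (contextExtension G).IsClique (D : Set _)) :
    ∃ C, D ⊆ contextClique C := by
  by_cases hnew : ∃ C, Sum.inr C ∈ D
  · obtain ⟨C, hC⟩ := hnew
    exact ⟨C, subset_contextClique_of_inr_mem hD hC⟩
  push Not at hnew
  let A : Finset V := D.preimage Sum.inl Sum.inl_injective.injOn
  have hA : G.IsClique (A : Set V) := fun a ha b hb hab =>
    hD (mem_preimage.1 ha) (mem_preimage.1 hb) (by simpa using hab)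
  obtain ⟨C, hC, hAC⟩ := exists_mem_maxCliques_superset G hA
  refine ⟨⟨C, hC⟩, ?_⟩
  rintro (a | C') hx
  · exact mem_insert_of_mem (mem_image_of_mem _ (hAC (mem_preimage.2 hx)))
  · exact absurd hx (hnew C')

end ContextExtension

theorem maxCliques_contextExtension_general {V : Type*} [Fintype V] [DecidableEq V]
    (G : SimpleGraph V)
    (D : Finset (V ⊕ {C : Finset V // C ∈ maxCliques G})) :
    IsMaxClique (contextExtension G) D ↔
      ∃ (C : Finset V) (hC : C ∈ maxCliques G),
        D = insert (Sum.inr ⟨C, hC⟩) (C.image Sum.inl) := by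
  constructor
  · rintro ⟨hD, hDmax⟩
    obtain ⟨C, hDC⟩ := exists_subset_contextClique hD
    exact ⟨C.1, C.2, (hDmax _ (isClique_contextClique C) hDC).symm⟩
  · rintro ⟨C, hC, rfl⟩
    refine ⟨isClique_contextClique ⟨C, hC⟩, fun D' hD' hsub => ?_⟩
    have hx : Sum.inr ⟨C, hC⟩ ∈ D' := hsub (mem_insert_self _ _)
    exact (hsub.antisymm (subset_contextClique_of_inr_mem hD' hx)).symm

/-- **The maximal cliques of the higher-dimensional context extension `Gᵉ` are exactly
the sets `C ∪ {x_C}`**, where `C` ranges over the maximal cliques of `G` and `x_C` is the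
new vertex added for `C`. -/
theorem maxCliques_contextExtension {V : Type*} [Fintype V] [DecidableEq V] [Nonempty V]
    (G : SimpleGraph V)
    (D : Finset (V ⊕ {C : Finset V // C ∈ maxCliques G})) :
    IsMaxClique (contextExtension G) D ↔
      ∃ (C : Finset V) (hC : C ∈ maxCliques G),
        D = insert (Sum.inr ⟨C, hC⟩) (C.image Sum.inl) :=
  maxCliques_contextExtension_general G D
end

section
/- Let G be a finite simple graph with n vertices and let v : V(G) → ℝⁿ be a faithful and linearly independent orthogonal co-representation of G. Let C be a maximal clique of G and for a subspace W of ℝⁿ let P_W denote the orthogonal projection onto W. Then for every vertex j of G, the projection onto (span{v_i : i ∈ C})^⊥ commutes with the projection onto span{v_j} if and only if j ∈ C. -/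
/-!
An orthogonal projection `P` commutes with the projection onto a line `𝕜 ∙ u` exactly when `P u`
lies on that line, i.e. when `u ∈ range P` or `u ∈ ker P`. For `P` the projection onto `Kᗮ` with
`K = span {v i : i ∈ C}`, linear independence gives `v j ∈ K ↔ j ∈ C`, while `v j ∈ Kᗮ` means that
`v j` is orthogonal to every `v i` with `i ∈ C`, so `j` is adjacent to all of `C`, and maximality
of `C` forces `j ∈ C`.
-/

open RealInnerProductSpace

noncomputable def projOnto {n : ℕ} (K : Submodule ℝ (EuclideanSpace ℝ (Fin n))) :
    EuclideanSpace ℝ (Fin n) →L[ℝ] EuclideanSpace ℝ (Fin n) :=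
  K.subtypeL.comp (K.orthogonalProjection)

namespace Submodule

variable {𝕜 E : Type*} [RCLike 𝕜] [NormedAddCommGroup E] [InnerProductSpace 𝕜 E]
  (K : Submodule 𝕜 E) [K.HasOrthogonalProjection] (u : E)

theorem commute_starProjection_span_singleton_iff :
    Commute K.starProjection (𝕜 ∙ u).starProjection ↔ u ∈ K ∨ u ∈ Kᗮ := by
  constructor
  · intro hcomm
    have hPu : K.starProjection u ∈ 𝕜 ∙ u := by
      have h : K.starProjection ((𝕜 ∙ u).starProjection u) =
          (𝕜 ∙ u).starProjection (K.starProjection u) := congr($hcomm u)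
      rw [starProjection_eq_self_iff.mpr (mem_span_singleton_self u)] at h
      exact h ▸ starProjection_apply_mem _ _
    obtain ⟨c, hc⟩ := mem_span_singleton.mp hPu
    rcases eq_or_ne c 0 with rfl | hc0
    · rw [zero_smul, eq_comm, starProjection_apply_eq_zero_iff] at hc
      exact Or.inr hc
    · refine Or.inl ?_
      rw [← inv_smul_smul₀ hc0 u, hc]
      exact K.smul_mem _ (starProjection_apply_mem _ _)
  · rintro (hu | hu)
    · have hle : (𝕜 ∙ u) ≤ K := (span_singleton_le_iff_mem u K).mpr hu
      refine (starProjection_comp_starProjection_of_le hle).trans ?_ |>.symm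
      ext x
      exact (starProjection_eq_self_iff.mpr (hle (starProjection_apply_mem _ x))).symm
    · have hortho : (𝕜 ∙ u) ⟂ K := (span_singleton_le_iff_mem u Kᗮ).mpr hu
      change K.starProjection ∘L _ = _ ∘L K.starProjection
      rw [hortho.symm.starProjection_comp_starProjection,
        hortho.starProjection_comp_starProjection]

end Submodule

theorem LinearIndependent.apply_mem_span_image_iff {ι R M : Type*} [Ring R] [Nontrivial R]
    [AddCommGroup M] [Module R M] {v : ι → M} (hv : LinearIndependent R v) {s : Set ι} {i : ι} :
    v i ∈ Submodule.span R (v '' s) ↔ i ∈ s :=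
  ⟨fun h => by_contra fun hi => hv.notMem_span_image hi h,
    fun hi => Submodule.subset_span (Set.mem_image_of_mem v hi)⟩

namespace IsMaxClique

variable {V : Type*} {G : SimpleGraph V} {C : Finset V}

theorem mem_of_forall_adj (hC : IsMaxClique G C) {j : V} (hadj : ∀ i ∈ C, j ≠ i → G.Adj j i) :
    j ∈ C := by
  classical
  have hclique : G.IsClique ((insert j C : Finset V) : Set V) := by
    rw [Finset.coe_insert]
    exact hC.1.insert hadj
  rw [← hC.2 _ hclique (Finset.subset_insert j C)]
  exact Finset.mem_insert_self j C

theorem mem_of_mem_orthogonal_span {E : Type*} [NormedAddCommGroup E] [InnerProductSpace ℝ E]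
    (hC : IsMaxClique G C) {v : V → E} (hadj : ∀ i j, i ≠ j → ⟪v i, v j⟫ = 0 → G.Adj i j)
    {j : V} (hj : v j ∈ (Submodule.span ℝ (v '' (C : Set V)))ᗮ) : j ∈ C :=
  hC.mem_of_forall_adj fun i hi hji =>
    hadj j i hji <| Submodule.inner_left_of_mem_orthogonal
      (Submodule.subset_span (Set.mem_image_of_mem v hi)) hj

end IsMaxClique

theorem projOnto_maxClique_commute_iff_mem_general
    {V : Type*} {n : ℕ}
    (G : SimpleGraph V) (v : V → EuclideanSpace ℝ (Fin n))
    (hli : LinearIndependent ℝ v)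
    (hfaith : ∀ i j : V, i ≠ j → (G.Adj i j ↔ ⟪v i, v j⟫ = 0))
    (C : Finset V) (hC : IsMaxClique G C) (j : V) :
    Commute (projOnto ((Submodule.span ℝ (v '' (C : Set V)))ᗮ))
        (projOnto (Submodule.span ℝ {v j})) ↔ j ∈ C := by
  set K := Submodule.span ℝ (v '' (C : Set V))
  change Commute Kᗮ.starProjection (ℝ ∙ v j).starProjection ↔ j ∈ C
  rw [Kᗮ.commute_starProjection_span_singleton_iff, K.orthogonal_orthogonal,
    hli.apply_mem_span_image_iff]
  exact or_iff_right_of_imp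
    (hC.mem_of_mem_orthogonal_span fun i j hij => (hfaith i j hij).mpr)

/-- Let `v` be a faithful and linearly independent orthogonal co-representation in `ℝⁿ`
of a finite simple graph `G` with `n` vertices, and let `C` be a maximal clique of `G`.
Then for every vertex `j`, the orthogonal projection onto `(span {v i : i ∈ C})ᗮ`
commutes with the orthogonal projection onto `span {v j}` if and only if `j ∈ C`. -/
theorem projOnto_maxClique_commute_iff_mem
    {V : Type*} [Fintype V] {n : ℕ} (hn : Fintype.card V = n)
    (G : SimpleGraph V) (v : V → EuclideanSpace ℝ (Fin n))
    (hinj : Function.Injective v) (hunit : ∀ i, ‖v i‖ = 1)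
    (hli : LinearIndependent ℝ v)
    (hfaith : ∀ i j : V, i ≠ j → (G.Adj i j ↔ ⟪v i, v j⟫ = 0))
    (C : Finset V) (hC : IsMaxClique G C) (j : V) :
    Commute (projOnto ((Submodule.span ℝ (v '' (C : Set V)))ᗮ))
        (projOnto (Submodule.span ℝ {v j})) ↔ j ∈ C :=
  projOnto_maxClique_commute_iff_mem_general G v hli hfaith C hC j
end

section
/- Let G be a finite simple graph with n vertices and let v : V(G) → ℝⁿ be a faithful and linearly independent orthogonal co-representation of G. If C₁ and C₂ are distinct maximal cliques of G, then the orthogonal projection onto (span{v_i : i ∈ C₁})^⊥ and the orthogonal projection onto (span{v_i : i ∈ C₂})^⊥ do not commute. -/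
/-!
Write `Sₖ = span (v '' Cₖ)` and `Pₖ` for the orthogonal projection onto it. The projections onto
`S₁ᗮ` and `S₂ᗮ` commute iff `P₁` and `P₂` do, and then `P₁` maps `S₂` into `S₁ ⊓ S₂`, which by
linear independence is `span (v '' (C₁ ∩ C₂))`. Pick `i ∈ C₁ \ C₂` and, by maximality of `C₂`,
some `j ∈ C₂` not adjacent to `i`. Since `C₁` is a clique, `v i` is orthogonal to
`span (v '' (C₁ ∩ C₂))`, hence to `P₁ (v j)`; yet `⟪v i, P₁ (v j)⟫ = ⟪P₁ (v i), v j⟫ = ⟪v i, v j⟫`,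
which is nonzero by faithfulness.
-/
open RealInnerProductSpace

theorem LinearIndependent.span_image_inf_span_image {ι R M : Type*} [Ring R] [AddCommGroup M]
    [Module R M] {v : ι → M} (hv : LinearIndependent R v) (s t : Set ι) :
    Submodule.span R (v '' s) ⊓ Submodule.span R (v '' t) = Submodule.span R (v '' (s ∩ t)) := by
  simp only [Finsupp.span_image_eq_map_linearCombination, Finsupp.supported_inter,
    Submodule.map_inf _ hv]

theorem commute_one_sub_iff {R : Type*} [Ring R] {a b : R} :
    Commute (1 - a) (1 - b) ↔ Commute a b := by
  have key {x y : R} (h : Commute x y) : Commute (1 - x) (1 - y) :=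
    (Commute.one_left _).sub_left ((Commute.one_right x).sub_right h)
  exact ⟨fun h => by simpa using key h, key⟩

namespace Submodule

variable {𝕜 E : Type*} [RCLike 𝕜] [NormedAddCommGroup E] [InnerProductSpace 𝕜 E]
  (K L : Submodule 𝕜 E) [K.HasOrthogonalProjection] [L.HasOrthogonalProjection]

theorem commute_starProjection_orthogonal_iff :
    Commute Kᗮ.starProjection Lᗮ.starProjection ↔ Commute K.starProjection L.starProjection := by
  rw [starProjection_orthogonal, starProjection_orthogonal, ← ContinuousLinearMap.one_def,
    commute_one_sub_iff]

variable {K L} in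
theorem starProjection_mem_inf_of_commute (h : Commute K.starProjection L.starProjection)
    {y : E} (hy : y ∈ L) : K.starProjection y ∈ K ⊓ L := by
  refine ⟨K.starProjection_apply_mem y, ?_⟩
  have hL := ((ContinuousLinearMap.IsIdempotentElem.commute_iff
    L.isIdempotentElem_starProjection).mp h.symm).1
  rw [range_starProjection, Module.End.mem_invtSubmodule] at hL
  exact hL hy

end Submodule

namespace IsMaxClique

variable {V : Type*} {G : SimpleGraph V} {C D : Finset V}

theorem not_subset_of_ne (hC : IsMaxClique G C) (hD : IsMaxClique G D) (hne : C ≠ D) :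
    ¬ C ⊆ D :=
  fun h => hne (hC.2 D hD.1 h).symm

theorem exists_not_adj (hC : IsMaxClique G C) {i : V} (hi : i ∉ C) :
    ∃ j ∈ C, ¬ G.Adj i j := by
  classical
  by_contra! h
  have hins : G.IsClique ((insert i C : Finset V) : Set V) := by
    rw [Finset.coe_insert]
    exact hC.1.insert fun j hj _ => h j hj
  exact hi (hC.2 _ hins (Finset.subset_insert i C) ▸ Finset.mem_insert_self i C)

end IsMaxClique

theorem projOnto_eq_starProjection {n : ℕ} (K : Submodule ℝ (EuclideanSpace ℝ (Fin n))) :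
    projOnto K = K.starProjection := rfl

theorem projOnto_distinct_maxCliques_not_commute_general
    {V : Type*} {n : ℕ}
    (G : SimpleGraph V) (v : V → EuclideanSpace ℝ (Fin n))
    (hli : LinearIndependent ℝ v)
    (hfaith : ∀ i j : V, i ≠ j → (G.Adj i j ↔ ⟪v i, v j⟫ = 0))
    (C₁ C₂ : Finset V) (hC₁ : IsMaxClique G C₁) (hC₂ : IsMaxClique G C₂)
    (hne : C₁ ≠ C₂) :
    ¬ Commute (projOnto ((Submodule.span ℝ (v '' (C₁ : Set V)))ᗮ))
        (projOnto ((Submodule.span ℝ (v '' (C₂ : Set V)))ᗮ)) := by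
  set S₁ := Submodule.span ℝ (v '' (C₁ : Set V))
  rw [projOnto_eq_starProjection, projOnto_eq_starProjection,
    Submodule.commute_starProjection_orthogonal_iff]
  intro hcomm
  obtain ⟨i, hi₁, hi₂⟩ := Finset.not_subset.mp (hC₁.not_subset_of_ne hC₂ hne)
  obtain ⟨j, hj₂, hnadj⟩ := hC₂.exists_not_adj hi₂
  have hij : i ≠ j := fun h => hi₂ (h ▸ hj₂)
  have hx : S₁.starProjection (v j) ∈ Submodule.span ℝ (v '' (C₁ ∩ C₂ : Set V)) := by
    rw [← hli.span_image_inf_span_image]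
    exact Submodule.starProjection_mem_inf_of_commute hcomm
      (Submodule.subset_span (Set.mem_image_of_mem v hj₂))
  have hperp : (ℝ ∙ v i) ⟂ Submodule.span ℝ (v '' (C₁ ∩ C₂ : Set V)) := by
    rw [Submodule.isOrtho_span]
    rintro _ rfl _ ⟨k, ⟨hk₁, hk₂⟩, rfl⟩
    have hik : i ≠ k := fun h => hi₂ (h ▸ hk₂)
    exact (hfaith i k hik).mp (hC₁.1 hi₁ hk₁ hik)
  have hproj : ⟪v i, S₁.starProjection (v j)⟫ = ⟪v i, v j⟫ := by
    have hvi : v i ∈ S₁ := Submodule.subset_span (Set.mem_image_of_mem v hi₁)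
    rw [← Submodule.inner_starProjection_left_eq_right,
      Submodule.starProjection_eq_self_iff.mpr hvi]
  refine hnadj ((hfaith i j hij).mpr ?_)
  rw [← hproj]
  exact hperp.inner_eq (Submodule.mem_span_singleton_self _) hx

/-- Let `v` be a faithful and linearly independent orthogonal co-representation in `ℝⁿ`
of a finite simple graph `G` with `n` vertices. If `C₁` and `C₂` are distinct maximal
cliques of `G`, then the orthogonal projections onto `(span {v i : i ∈ C₁})ᗮ` and onto
`(span {v i : i ∈ C₂})ᗮ` do not commute. -/
theorem projOnto_distinct_maxCliques_not_commute
    {V : Type*} [Fintype V] {n : ℕ} (hn : Fintype.card V = n)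
    (G : SimpleGraph V) (v : V → EuclideanSpace ℝ (Fin n))
    (hinj : Function.Injective v) (hunit : ∀ i, ‖v i‖ = 1)
    (hli : LinearIndependent ℝ v)
    (hfaith : ∀ i j : V, i ≠ j → (G.Adj i j ↔ ⟪v i, v j⟫ = 0))
    (C₁ C₂ : Finset V) (hC₁ : IsMaxClique G C₁) (hC₂ : IsMaxClique G C₂)
    (hne : C₁ ≠ C₂) :
    ¬ Commute (projOnto ((Submodule.span ℝ (v '' (C₁ : Set V)))ᗮ))
        (projOnto ((Submodule.span ℝ (v '' (C₂ : Set V)))ᗮ)) :=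
  projOnto_distinct_maxCliques_not_commute_general G v hli hfaith C₁ C₂ hC₁ hC₂ hne
end

section
/- Let G be a finite simple graph with at least one vertex. If α(G; c_G) = c(G), then there exists a 0-1 state on G; explicitly, if I is an independent set of G with c_G(I) = c(G), then the indicator function of I is a 0-1 state on G. -/
open Finset

section Aux
variable {V : Type*} [Fintype V] [DecidableEq V] (G : SimpleGraph V)

lemma my_swap (I : Finset V) :
    (∑ i ∈ I, cG G i) = ∑ C ∈ maxCliques G, (I.filter (· ∈ C)).card := by
  simp only [cG, Finset.card_filter]
  rw [Finset.sum_comm]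
  simp
  apply Finset.sum_congr rfl
  intro C _
  congr 1
  ext x
  simp

lemma my_le_one {I : Finset V} (hI : IsIndep G I) {C : Finset V} (hC : C ∈ maxCliques G) :
    (I.filter (· ∈ C)).card ≤ 1 := by
  have hclique : G.IsClique (C : Set V) := by
    simp only [maxCliques, Finset.mem_filter] at hC
    exact hC.2.1
  refine Finset.card_le_one.2 ?_
  intro a ha b hb
  simp only [Finset.mem_filter] at ha hb
  by_contra hne
  exact hI a ha.1 b hb.1 hne (hclique ha.2 hb.2 hne)

lemma my_sum_le {I : Finset V} (hI : IsIndep G I) :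
    (∑ i ∈ I, cG G i) ≤ numMaxCliques G := by
  rw [my_swap]
  calc ∑ C ∈ maxCliques G, (I.filter (· ∈ C)).card
      ≤ ∑ _C ∈ maxCliques G, 1 := Finset.sum_le_sum fun C hC => my_le_one G hI hC
    _ = numMaxCliques G := by simp [numMaxCliques]

end Aux

/-- **If `α(G; c_G) = c(G)` then `G` has a 0-1 state**; explicitly, if `I` is an
independent set of `G` with `c_G(I) = c(G)`, then the indicator function of `I` is a
0-1 state on `G`. -/
theorem exists_zeroOneState_of_alpha_eq {V : Type*} [Fintype V] [DecidableEq V]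
    [Nonempty V] (G : SimpleGraph V) :
    ((alphaW G (fun i => (cG G i : ℝ)) = (numMaxCliques G : ℝ)) →
      ∃ v : V → ℝ, IsGraphState G v ∧ ∀ i, v i = 0 ∨ v i = 1) ∧
    (∀ I : Finset V, IsIndep G I → (∑ i ∈ I, cG G i) = numMaxCliques G →
      IsGraphState G (fun i => if i ∈ I then (1 : ℝ) else 0)) := by
  classical
  have part2 : ∀ I : Finset V, IsIndep G I → (∑ i ∈ I, cG G i) = numMaxCliques G →
      IsGraphState G (fun i => if i ∈ I then (1 : ℝ) else 0) := by
    intro I hI hsum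
    have htot : ∑ C ∈ maxCliques G, (I.filter (· ∈ C)).card
        = ∑ _C ∈ maxCliques G, 1 := by
      rw [← my_swap G I, hsum]; simp [numMaxCliques]
    have heach : ∀ C ∈ maxCliques G, (I.filter (· ∈ C)).card = 1 :=
      (Finset.sum_eq_sum_iff_of_le (fun C hC => my_le_one G hI hC)).1 htot
    constructor
    · intro i; by_cases h : i ∈ I <;> simp [h]
    · intro C hC
      have h1 : ∑ i ∈ C, (if i ∈ I then (1 : ℝ) else 0)
          = ((C.filter (· ∈ I)).card : ℝ) := by
        rw [Finset.card_filter]; push_cast; apply Finset.sum_congr rfl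
        intro i _; by_cases h : i ∈ I <;> simp [h]
      have h2 : C.filter (· ∈ I) = I.filter (· ∈ C) := by
        ext x; simp [and_comm]
      rw [h1, h2, heach C hC]; norm_num
  refine ⟨?_, part2⟩
  intro hα
  set f : Finset V → ℝ := fun I => ∑ i ∈ I, (cG G i : ℝ) with hf
  set S : Set ℝ := { x : ℝ | ∃ I : Finset V, IsIndep G I ∧ x = ∑ i ∈ I, (cG G i : ℝ) }
    with hS
  have hne : S.Nonempty := ⟨0, ∅, fun i hi => absurd hi (by simp), by simp⟩
  have hfin : S.Finite := by
    apply (Set.finite_range f).subset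
    rintro x ⟨I, _, rfl⟩
    exact ⟨I, rfl⟩
  have hmem : sSup S ∈ S := hne.csSup_mem hfin
  obtain ⟨I, hI, hIsum⟩ := hmem
  have hαS : alphaW G (fun i => (cG G i : ℝ)) = sSup S := rfl
  have hnat : (∑ i ∈ I, cG G i) = numMaxCliques G := by
    have : ((∑ i ∈ I, cG G i : ℕ) : ℝ) = (numMaxCliques G : ℝ) := by
      push_cast
      rw [← hIsum, ← hαS, hα]
    exact_mod_cast this
  refine ⟨fun i => if i ∈ I then (1 : ℝ) else 0, part2 I hI hnat, ?_⟩
  intro i; by_cases h : i ∈ I <;> simp [h]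
end
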